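/- arXiv:1402.0357 — 4 statements merged into one kernel-verified Lean document; each statement's English description precedes it below -/
import Mathlib

section
/- Lemma (simplification): Let α>0 and let ν:(0,∞)²→[0,∞) be measurable, homogeneous of order −α (ν(tx,ty) = t^{−α}·ν(x,y) for all t,x,y>0), with ∫_1^∞ ν(x,1) x^{−1} dx < ∞ and ∫_1^∞ ν(1,y) y^{−1} dy < ∞. Then: (i) ∫_1^∞ ∫_y^∞ ν(x,y)·(xy)^{−1} dx dy = (1/α)·∫_1^∞ ν(x,1) x^{−1} dx; (ii) ∫_1^∞ ∫_x^∞ ν(x,y)·(xy)^{−1} dy dx = (1/α)·∫_1^∞ ν(1,y) y^{−1} dy; and consequently (iii) ∫_1^∞ ∫_1^∞ ν(x,y)·(xy)^{−1} dx dy = (1/α)·∫_1^∞ ν(x,1) x^{−1} dx + (1/α)·∫_1^∞ ν(1,y) y^{−1} dy. -/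
/-! Substituting `x = y u` (the measure `dx / x` is dilation invariant) and using homogeneity,
`∫_{x > y} ν(x,y)/(xy) dx = y^(-α-1) ∫_{u > 1} ν(u,1)/u du`, and `∫_1^∞ y^(-α-1) dy = 1/α`;
the triangle `y > x` is symmetric. For the square, split `x ∈ (1,∞)` at `y`: Fubini on the
triangle `1 < x ≤ y`, integrable because the same computation applies to `|ν|`, turns that
part into the iterated integral over `y > x`. -/

open MeasureTheory Set Function

theorem comp_mul_left_div_self_eq (f : ℝ → ℝ) {c : ℝ} (hc : c ≠ 0) :
    (fun u => f (c * u) / u) = fun u => c * (f (c * u) / (c * u)) := by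
  ext u
  rw [mul_div_assoc', mul_div_mul_left _ _ hc]

theorem setIntegral_Ioi_comp_mul_left_div_self (f : ℝ → ℝ) {c : ℝ} (hc : 0 < c) (a : ℝ) :
    ∫ u in Ioi a, f (c * u) / u = ∫ x in Ioi (c * a), f x / x := by
  rw [comp_mul_left_div_self_eq f hc.ne', integral_const_mul,
    integral_comp_mul_left_Ioi (fun x => f x / x) a hc, smul_eq_mul, mul_inv_cancel_left₀ hc.ne']

theorem integrableOn_Ioi_comp_mul_left_div_self_iff (f : ℝ → ℝ) {c : ℝ} (hc : 0 < c)
    (a : ℝ) :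
    IntegrableOn (fun u => f (c * u) / u) (Ioi a) ↔
      IntegrableOn (fun x => f x / x) (Ioi (c * a)) := by
  rw [comp_mul_left_div_self_eq f hc.ne', IntegrableOn,
    integrable_const_mul_iff (isUnit_iff_ne_zero.2 hc.ne'), ← IntegrableOn,
    integrableOn_Ioi_comp_mul_left_iff (fun x => f x / x) a hc]

def IsPosHomogeneous (d : ℝ) (ν : ℝ → ℝ → ℝ) : Prop :=
  ∀ t x y : ℝ, 0 < t → 0 < x → 0 < y → ν (t * x) (t * y) = t ^ d * ν x y

namespace IsPosHomogeneous

variable {d : ℝ} {ν : ℝ → ℝ → ℝ}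

theorem norm (hν : IsPosHomogeneous d ν) : IsPosHomogeneous d fun x y => ‖ν x y‖ :=
  fun t x y ht hx hy => by
    dsimp only
    rw [hν t x y ht hx hy, norm_mul, Real.norm_of_nonneg (Real.rpow_nonneg ht.le d)]

theorem comp_mul_left_div (hν : IsPosHomogeneous d ν) {y u : ℝ} (hy : 0 < y) (hu : 0 < u) :
    ν (y * u) y / y = y ^ (d - 1) * ν u 1 := by
  have h := hν y u 1 hy hu one_pos
  rw [mul_one] at h
  rw [h, Real.rpow_sub_one hy.ne']
  ring

theorem comp_mul_right_div (hν : IsPosHomogeneous d ν) {x u : ℝ} (hx : 0 < x) (hu : 0 < u) :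
    ν x (x * u) / x = x ^ (d - 1) * ν 1 u := by
  have h := hν x 1 u hx one_pos hu
  rw [mul_one] at h
  rw [h, Real.rpow_sub_one hx.ne']
  ring

theorem setIntegral_Ioi_div_mul_left (hν : IsPosHomogeneous d ν) {y : ℝ} (hy : 0 < y) :
    ∫ x in Ioi y, ν x y / (x * y) = y ^ (d - 1) * ∫ x in Ioi 1, ν x 1 / x := by
  calc ∫ x in Ioi y, ν x y / (x * y) = ∫ u in Ioi 1, ν (y * u) y / y / u := by
        simp_rw [div_mul_eq_div_div_swap]
        rw [setIntegral_Ioi_comp_mul_left_div_self (fun x => ν x y / y) hy, mul_one]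
    _ = ∫ u in Ioi 1, y ^ (d - 1) * (ν u 1 / u) :=
        setIntegral_congr_fun measurableSet_Ioi fun u hu => by
          rw [hν.comp_mul_left_div hy (one_pos.trans hu), mul_div_assoc]
    _ = y ^ (d - 1) * ∫ x in Ioi 1, ν x 1 / x := integral_const_mul _ _

theorem setIntegral_Ioi_div_mul_right (hν : IsPosHomogeneous d ν) {x : ℝ} (hx : 0 < x) :
    ∫ y in Ioi x, ν x y / (x * y) = x ^ (d - 1) * ∫ y in Ioi 1, ν 1 y / y := by
  calc ∫ y in Ioi x, ν x y / (x * y) = ∫ u in Ioi 1, ν x (x * u) / x / u := by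
        simp_rw [div_mul_eq_div_div]
        rw [setIntegral_Ioi_comp_mul_left_div_self (fun y => ν x y / x) hx, mul_one]
    _ = ∫ u in Ioi 1, x ^ (d - 1) * (ν 1 u / u) :=
        setIntegral_congr_fun measurableSet_Ioi fun u hu => by
          rw [hν.comp_mul_right_div hx (one_pos.trans hu), mul_div_assoc]
    _ = x ^ (d - 1) * ∫ y in Ioi 1, ν 1 y / y := integral_const_mul _ _

theorem integrableOn_Ioi_div_mul_left (hν : IsPosHomogeneous d ν)
    (hint : IntegrableOn (fun x => ν x 1 / x) (Ioi 1)) {y : ℝ} (hy : 0 < y) :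
    IntegrableOn (fun x => ν x y / (x * y)) (Ioi y) := by
  have h := IntegrableOn.congr_fun (hint.const_mul (y ^ (d - 1))) (fun u hu => by
    rw [← mul_div_assoc, ← hν.comp_mul_left_div hy (one_pos.trans hu)]) measurableSet_Ioi
  rw [integrableOn_Ioi_comp_mul_left_div_self_iff (fun x => ν x y / y) hy, mul_one] at h
  simpa only [div_mul_eq_div_div_swap] using h

theorem integrableOn_Ioi_div_mul_right (hν : IsPosHomogeneous d ν)
    (hint : IntegrableOn (fun y => ν 1 y / y) (Ioi 1)) {x : ℝ} (hx : 0 < x) :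
    IntegrableOn (fun y => ν x y / (x * y)) (Ioi x) := by
  have h := IntegrableOn.congr_fun (hint.const_mul (x ^ (d - 1))) (fun u hu => by
    rw [← mul_div_assoc, ← hν.comp_mul_right_div hx (one_pos.trans hu)]) measurableSet_Ioi
  rw [integrableOn_Ioi_comp_mul_left_div_self_iff (fun y => ν x y / x) hx, mul_one] at h
  simpa only [div_mul_eq_div_div] using h

end IsPosHomogeneous

section RpowWeight

variable {α : ℝ} {F : ℝ → ℝ} {K : ℝ}

theorem integrableOn_Ioi_one_of_eq_rpow_mul (hα : 0 < α)
    (hF : ∀ y > 1, F y = y ^ (-α - 1) * K) :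
    IntegrableOn F (Ioi 1) :=
  IntegrableOn.congr_fun
    ((integrableOn_Ioi_rpow_of_lt (by linarith : -α - 1 < -1) one_pos).mul_const K)
    (fun y hy => (hF y hy).symm) measurableSet_Ioi

theorem setIntegral_Ioi_one_of_eq_rpow_mul (hα : 0 < α)
    (hF : ∀ y > 1, F y = y ^ (-α - 1) * K) :
    ∫ y in Ioi 1, F y = α⁻¹ * K := by
  rw [setIntegral_congr_fun measurableSet_Ioi hF, integral_mul_const,
    integral_Ioi_rpow_of_lt (by linarith) one_pos, Real.one_rpow, sub_add_cancel]
  field_simp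

end RpowWeight

section Triangle

variable {f : ℝ → ℝ → ℝ} {a : ℝ}

noncomputable def uncurryLE (f : ℝ → ℝ → ℝ) : ℝ × ℝ → ℝ :=
  {p : ℝ × ℝ | p.1 ≤ p.2}.indicator (uncurry f)

theorem setIntegral_Ioi_uncurryLE_right {x : ℝ} (hx : a < x) :
    ∫ y in Ioi a, uncurryLE f (x, y) = ∫ y in Ioi x, f x y := by
  change ∫ y in Ioi a, (Ici x).indicator (f x) y = _
  rw [integral_indicator measurableSet_Ici, Measure.restrict_restrict measurableSet_Ici,
    inter_eq_left.2 (Ici_subset_Ioi.2 hx), integral_Ici_eq_integral_Ioi]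

theorem setIntegral_Ioi_uncurryLE_left (y : ℝ) :
    ∫ x in Ioi a, uncurryLE f (x, y) = ∫ x in Ioc a y, f x y := by
  change ∫ x in Ioi a, (Iic y).indicator (f · y) x = _
  rw [integral_indicator measurableSet_Iic, Measure.restrict_restrict measurableSet_Iic,
    inter_comm, Ioi_inter_Iic]

theorem integrable_uncurryLE (hf : Measurable (uncurry f))
    (hright : ∀ x > a, IntegrableOn (f x) (Ioi x))
    (hright' : IntegrableOn (fun x => ∫ y in Ioi x, ‖f x y‖) (Ioi a)) :
    Integrable (uncurryLE f) ((volume.restrict (Ioi a)).prod (volume.restrict (Ioi a))) := by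
  have hmeas : Measurable (uncurryLE f) :=
    hf.indicator (measurableSet_le measurable_fst measurable_snd)
  refine (integrable_prod_iff hmeas.aestronglyMeasurable).2 ⟨?_, ?_⟩
  · filter_upwards [ae_restrict_mem measurableSet_Ioi] with x hx
    exact ((integrable_indicator_iff measurableSet_Ici).2
      ((integrableOn_Ici_iff_integrableOn_Ioi).2 (hright x hx))).restrict
  · refine hright'.congr_fun (fun x hx => ?_) measurableSet_Ioi
    simp only [uncurryLE, norm_indicator_eq_indicator_norm]
    exact (setIntegral_Ioi_uncurryLE_right (f := fun x y => ‖f x y‖) hx).symm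

theorem integrableOn_Ioc_of_integrable_uncurryLE {y : ℝ}
    (h : Integrable (fun x => uncurryLE f (x, y)) (volume.restrict (Ioi a))) :
    IntegrableOn (fun x => f x y) (Ioc a y) := by
  have h' := (integrable_indicator_iff (f := (f · y)) measurableSet_Iic).1 h
  rwa [IntegrableOn, Measure.restrict_restrict measurableSet_Iic, inter_comm, Ioi_inter_Iic] at h'

theorem setIntegral_Ioi_setIntegral_Ioi_eq_add (hf : Measurable (uncurry f))
    (hleft : ∀ y > a, IntegrableOn (fun x => f x y) (Ioi y))
    (hleft' : IntegrableOn (fun y => ∫ x in Ioi y, f x y) (Ioi a))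
    (hright : ∀ x > a, IntegrableOn (f x) (Ioi x))
    (hright' : IntegrableOn (fun x => ∫ y in Ioi x, ‖f x y‖) (Ioi a)) :
    ∫ y in Ioi a, ∫ x in Ioi a, f x y =
      (∫ y in Ioi a, ∫ x in Ioi y, f x y) + ∫ x in Ioi a, ∫ y in Ioi x, f x y := by
  have hL := integrable_uncurryLE hf hright hright'
  have hsplit : ∀ᵐ y ∂(volume.restrict (Ioi a)),
      ∫ x in Ioi a, f x y = (∫ x in Ioi a, uncurryLE f (x, y)) + ∫ x in Ioi y, f x y := by
    filter_upwards [hL.prod_left_ae, ae_restrict_mem measurableSet_Ioi] with y hLy hy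
    rw [setIntegral_Ioi_uncurryLE_left, ← setIntegral_union Ioc_disjoint_Ioi_same
      measurableSet_Ioi (integrableOn_Ioc_of_integrable_uncurryLE hLy) (hleft y hy),
      Ioc_union_Ioi_eq_Ioi hy.le]
  have hswap : ∫ y in Ioi a, ∫ x in Ioi a, uncurryLE f (x, y) =
      ∫ x in Ioi a, ∫ y in Ioi x, f x y := by
    rw [← integral_integral_swap (f := fun x y => uncurryLE f (x, y)) hL]
    exact setIntegral_congr_fun measurableSet_Ioi fun x hx => setIntegral_Ioi_uncurryLE_right hx
  rw [integral_congr_ae hsplit, integral_add hL.integral_prod_right hleft', hswap, add_comm]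

end Triangle

theorem nu_integral_simplification_general
    (α : ℝ) (hα : 0 < α) (ν : ℝ → ℝ → ℝ)
    (hmeas : Measurable (fun p : ℝ × ℝ => ν p.1 p.2))
    (hhom : ∀ t x y : ℝ, 0 < t → 0 < x → 0 < y → ν (t * x) (t * y) = t ^ (-α) * ν x y)
    (hint1 : IntegrableOn (fun x : ℝ => ν x 1 / x) (Set.Ioi 1))
    (hint2 : IntegrableOn (fun y : ℝ => ν 1 y / y) (Set.Ioi 1)) :
    (∫ y in Set.Ioi (1 : ℝ), ∫ x in Set.Ioi y, ν x y / (x * y)) =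
        α⁻¹ * ∫ x in Set.Ioi (1 : ℝ), ν x 1 / x ∧
    (∫ x in Set.Ioi (1 : ℝ), ∫ y in Set.Ioi x, ν x y / (x * y)) =
        α⁻¹ * ∫ y in Set.Ioi (1 : ℝ), ν 1 y / y ∧
    (∫ y in Set.Ioi (1 : ℝ), ∫ x in Set.Ioi (1 : ℝ), ν x y / (x * y)) =
        α⁻¹ * (∫ x in Set.Ioi (1 : ℝ), ν x 1 / x) +
          α⁻¹ * ∫ y in Set.Ioi (1 : ℝ), ν 1 y / y := by
  have hν : IsPosHomogeneous (-α) ν := hhom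
  have hleft : ∀ y > 1,
      ∫ x in Ioi y, ν x y / (x * y) = y ^ (-α - 1) * ∫ x in Ioi 1, ν x 1 / x :=
    fun y hy => hν.setIntegral_Ioi_div_mul_left (one_pos.trans hy)
  have hright : ∀ x > 1,
      ∫ y in Ioi x, ν x y / (x * y) = x ^ (-α - 1) * ∫ y in Ioi 1, ν 1 y / y :=
    fun x hx => hν.setIntegral_Ioi_div_mul_right (one_pos.trans hx)
  have hright_norm : ∀ x > 1, ∫ y in Ioi x, ‖ν x y / (x * y)‖ =
      x ^ (-α - 1) * ∫ y in Ioi 1, ‖ν 1 y‖ / y := by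
    intro x hx
    have hx0 := one_pos.trans hx
    rw [← hν.norm.setIntegral_Ioi_div_mul_right hx0]
    refine setIntegral_congr_fun measurableSet_Ioi fun y hy => ?_
    rw [norm_div, Real.norm_of_nonneg (mul_pos hx0 (hx0.trans hy)).le]
  have part1 := setIntegral_Ioi_one_of_eq_rpow_mul hα hleft
  have part2 := setIntegral_Ioi_one_of_eq_rpow_mul hα hright
  have hf : Measurable (uncurry fun x y : ℝ => ν x y / (x * y)) :=
    hmeas.div (measurable_fst.mul measurable_snd)
  refine ⟨part1, part2, ?_⟩
  rw [setIntegral_Ioi_setIntegral_Ioi_eq_add hf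
    (fun y hy => hν.integrableOn_Ioi_div_mul_left hint1 (one_pos.trans hy))
    (integrableOn_Ioi_one_of_eq_rpow_mul hα hleft)
    (fun x hx => hν.integrableOn_Ioi_div_mul_right hint2 (one_pos.trans hx))
    (integrableOn_Ioi_one_of_eq_rpow_mul hα hright_norm), part1, part2]

/-- Lemma (simplification): for a measurable, `(−α)`-homogeneous `ν : (0,∞)² → [0,∞)` with
integrable sections, the double integrals over the regions `{x > y ≥ 1}`, `{y > x ≥ 1}`
and `[1,∞)²` of `ν(x,y)/(xy)` reduce to one-dimensional integrals. -/
theorem nu_integral_simplification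
    (α : ℝ) (hα : 0 < α) (ν : ℝ → ℝ → ℝ)
    (hmeas : Measurable (fun p : ℝ × ℝ => ν p.1 p.2))
    (hnonneg : ∀ x y : ℝ, 0 < x → 0 < y → 0 ≤ ν x y)
    (hhom : ∀ t x y : ℝ, 0 < t → 0 < x → 0 < y → ν (t * x) (t * y) = t ^ (-α) * ν x y)
    (hint1 : IntegrableOn (fun x : ℝ => ν x 1 / x) (Set.Ioi 1))
    (hint2 : IntegrableOn (fun y : ℝ => ν 1 y / y) (Set.Ioi 1)) :
    (∫ y in Set.Ioi (1 : ℝ), ∫ x in Set.Ioi y, ν x y / (x * y)) =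
        α⁻¹ * ∫ x in Set.Ioi (1 : ℝ), ν x 1 / x ∧
    (∫ x in Set.Ioi (1 : ℝ), ∫ y in Set.Ioi x, ν x y / (x * y)) =
        α⁻¹ * ∫ y in Set.Ioi (1 : ℝ), ν 1 y / y ∧
    (∫ y in Set.Ioi (1 : ℝ), ∫ x in Set.Ioi (1 : ℝ), ν x y / (x * y)) =
        α⁻¹ * (∫ x in Set.Ioi (1 : ℝ), ν x 1 / x) +
          α⁻¹ * ∫ y in Set.Ioi (1 : ℝ), ν 1 y / y :=
  nu_integral_simplification_general α hα ν hmeas hhom hint1 hint2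
end

section
/- Bivariate exponent-measure limit for the Gumbel copula (Example): Let α>0 and β≥1, and let C_β(u,v) = exp(−((−log u)^β + (−log v)^β)^{1/β}) for u,v ∈ (0,1] be the bivariate Gumbel copula. Let G and H be cdfs on (0,∞) and a,b:(1,∞)→(0,∞) be such that for every x>0, t·(1−G(a(t)x)) → x^{−α} and t·(1−H(b(t)x)) → x^{−α} as t→∞. Define the joint survival function F̄(s,u) = (1−G(s)) + (1−H(u)) − 1 + C_β(G(s), H(u)). Then for all x,y>0, t·F̄(a(t)x, b(t)y) → x^{−α} + y^{−α} − (x^{−αβ} + y^{−αβ})^{1/β} as t→∞. -/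
/-!
With `p = 1 - G(a t x)` and `q = 1 - H(b t y)`, the survival function is
`p + q + (C_β(1 - p, 1 - q) - 1)`. Since `-log (1 - p) ~ p`, the exponent of the copula is
`ℓ(-log (1 - p), -log (1 - q))` with `ℓ(u, v) = (u^β + v^β)^(1/β)`, and `ℓ` is positively
homogeneous of degree one, so `t · ℓ(-log (1 - p), -log (1 - q)) → ℓ(x^{-α}, y^{-α})`.
Finally `exp (-z) - 1 ~ -z`, so `t (C_β - 1) → -ℓ(x^{-α}, y^{-α})`.
-/

open Filter Topology

noncomputable section

def gumbelCopula (β : ℝ) (u v : ℝ) : ℝ :=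
  Real.exp (-(((-Real.log u) ^ β + (-Real.log v) ^ β) ^ (β⁻¹)))

/-- The stable tail dependence function of the Gumbel copula. -/
def gumbelTailDep (β u v : ℝ) : ℝ := (u ^ β + v ^ β) ^ β⁻¹

lemma gumbelCopula_eq_exp_neg_gumbelTailDep (β u v : ℝ) :
    gumbelCopula β u v = Real.exp (-gumbelTailDep β (-Real.log u) (-Real.log v)) := rfl

lemma gumbelTailDep_mul {β t u v : ℝ} (hβ : β ≠ 0) (ht : 0 ≤ t) (hu : 0 ≤ u) (hv : 0 ≤ v) :
    gumbelTailDep β (t * u) (t * v) = t * gumbelTailDep β u v := by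
  unfold gumbelTailDep
  rw [Real.mul_rpow ht hu, Real.mul_rpow ht hv, ← mul_add,
    Real.mul_rpow (by positivity) (by positivity), Real.rpow_rpow_inv ht hβ]

lemma tendsto_zero_of_tendsto_mul_atTop {p : ℝ → ℝ} {X : ℝ}
    (hp : Tendsto (fun t => t * p t) atTop (𝓝 X)) : Tendsto p atTop (𝓝 0) := by
  have h := hp.mul tendsto_inv_atTop_zero
  rw [mul_zero] at h
  refine h.congr' ?_
  filter_upwards [eventually_ne_atTop 0] with t ht
  field_simp

lemma eventually_pos_of_tendsto_mul_atTop {p : ℝ → ℝ} {X : ℝ} (hX : 0 < X)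
    (hp : Tendsto (fun t => t * p t) atTop (𝓝 X)) : ∀ᶠ t in atTop, 0 < p t := by
  filter_upwards [hp.eventually (eventually_gt_nhds hX), eventually_gt_atTop 0] with t htp ht
  exact pos_of_mul_pos_right htp ht.le

lemma tendsto_mul_comp_of_hasDerivAt {f p : ℝ → ℝ} {c X : ℝ} (hf : HasDerivAt f c 0)
    (hf0 : f 0 = 0) (hp : Tendsto (fun t => t * p t) atTop (𝓝 X)) :
    Tendsto (fun t => t * f (p t)) atTop (𝓝 (c * X)) := by
  have hlin : (fun t => f (p t) - c * p t) =o[atTop] p := by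
    have h := (hasDerivAt_iff_isLittleO.mp hf).comp_tendsto
      (tendsto_zero_of_tendsto_mul_atTop hp)
    simpa [Function.comp_def, hf0, mul_comm c] using h
  have herr : Tendsto (fun t => t * (f (p t) - c * p t)) atTop (𝓝 0) :=
    (Asymptotics.isLittleO_one_iff ℝ).mp <|
      ((Asymptotics.isBigO_refl (fun t : ℝ => t) atTop).mul_isLittleO hlin).trans_isBigO
        (hp.isBigO_one ℝ)
  simpa using (herr.add (hp.const_mul c)).congr fun t => by ring

lemma hasDerivAt_neg_log_one_sub : HasDerivAt (fun z : ℝ => -Real.log (1 - z)) 1 0 := by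
  have h : HasDerivAt (fun z : ℝ => Real.log (1 - z)) (-1) 0 := by
    simpa using ((hasDerivAt_id (0 : ℝ)).const_sub 1).log (by norm_num)
  simpa using h.fun_neg

lemma hasDerivAt_exp_neg_sub_one : HasDerivAt (fun z : ℝ => Real.exp (-z) - 1) (-1) 0 := by
  simpa using ((hasDerivAt_id (0 : ℝ)).neg.exp).sub_const 1

lemma tendsto_mul_gumbelTailDep {β X Y : ℝ} {U V : ℝ → ℝ} (hβ : 0 < β) (hX : 0 < X)
    (hY : 0 < Y) (hU : Tendsto (fun t => t * U t) atTop (𝓝 X))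
    (hV : Tendsto (fun t => t * V t) atTop (𝓝 Y)) :
    Tendsto (fun t => t * gumbelTailDep β (U t) (V t)) atTop (𝓝 (gumbelTailDep β X Y)) := by
  have hlim : Tendsto (fun t => gumbelTailDep β (t * U t) (t * V t)) atTop
      (𝓝 (gumbelTailDep β X Y)) :=
    ((hU.rpow_const (Or.inr hβ.le)).add (hV.rpow_const (Or.inr hβ.le))).rpow_const
      (Or.inr (inv_nonneg.mpr hβ.le))
  refine hlim.congr' ?_
  filter_upwards [eventually_pos_of_tendsto_mul_atTop hX hU,
    eventually_pos_of_tendsto_mul_atTop hY hV, eventually_ge_atTop 0] with t hUt hVt ht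
  exact gumbelTailDep_mul hβ.ne' ht hUt.le hVt.le

lemma tendsto_mul_gumbel_survival {β X Y : ℝ} {p q : ℝ → ℝ} (hβ : 0 < β) (hX : 0 < X)
    (hY : 0 < Y) (hp : Tendsto (fun t => t * p t) atTop (𝓝 X))
    (hq : Tendsto (fun t => t * q t) atTop (𝓝 Y)) :
    Tendsto (fun t => t * (p t + q t - 1 + gumbelCopula β (1 - p t) (1 - q t))) atTop
      (𝓝 (X + Y - gumbelTailDep β X Y)) := by
  have hU := tendsto_mul_comp_of_hasDerivAt hasDerivAt_neg_log_one_sub (by simp) hp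
  have hV := tendsto_mul_comp_of_hasDerivAt hasDerivAt_neg_log_one_sub (by simp) hq
  rw [one_mul] at hU hV
  have hexp := tendsto_mul_comp_of_hasDerivAt hasDerivAt_exp_neg_sub_one (by simp)
    (tendsto_mul_gumbelTailDep hβ hX hY hU hV)
  rw [neg_one_mul] at hexp
  rw [sub_eq_add_neg]
  refine ((hp.add hq).add hexp).congr fun t => ?_
  rw [gumbelCopula_eq_exp_neg_gumbelTailDep]
  ring

theorem gumbel_exponent_measure_limit_general
    (α β : ℝ) (hβ : 1 ≤ β)
    (G H : ℝ → ℝ)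
    (a b : ℝ → ℝ)
    (hGa : ∀ x : ℝ, 0 < x →
      Tendsto (fun t : ℝ => t * (1 - G (a t * x))) atTop (𝓝 (x ^ (-α))))
    (hHb : ∀ x : ℝ, 0 < x →
      Tendsto (fun t : ℝ => t * (1 - H (b t * x))) atTop (𝓝 (x ^ (-α)))) :
    ∀ x y : ℝ, 0 < x → 0 < y →
      Tendsto (fun t : ℝ => t * ((1 - G (a t * x)) + (1 - H (b t * y)) - 1 +
          gumbelCopula β (G (a t * x)) (H (b t * y))))
        atTop
        (𝓝 (x ^ (-α) + y ^ (-α) - (x ^ (-(α * β)) + y ^ (-(α * β))) ^ (β⁻¹))) := by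
  intro x y hx hy
  have hlim := tendsto_mul_gumbel_survival (zero_lt_one.trans_le hβ)
    (Real.rpow_pos_of_pos hx (-α)) (Real.rpow_pos_of_pos hy (-α)) (hGa x hx) (hHb y hy)
  have hpow : ∀ z : ℝ, 0 < z → (z ^ (-α)) ^ β = z ^ (-(α * β)) := fun z hz => by
    rw [← Real.rpow_mul hz.le, neg_mul]
  simpa only [gumbelTailDep, hpow x hx, hpow y hy, sub_sub_cancel] using hlim

/-- Bivariate exponent-measure limit for the Gumbel copula: if `t(1−G(a(t)x)) → x^{−α}`
and `t(1−H(b(t)y)) → y^{−α}`, then the joint survival function built from the Gumbel copula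
satisfies `t·F̄(a(t)x, b(t)y) → x^{−α} + y^{−α} − (x^{−αβ} + y^{−αβ})^{1/β}`. -/
theorem gumbel_exponent_measure_limit
    (α β : ℝ) (hα : 0 < α) (hβ : 1 ≤ β)
    (G H : ℝ → ℝ) (hGmono : Monotone G) (hHmono : Monotone H)
    (hG01 : ∀ s, 0 ≤ G s ∧ G s ≤ 1) (hH01 : ∀ s, 0 ≤ H s ∧ H s ≤ 1)
    (a b : ℝ → ℝ)
    (hGa : ∀ x : ℝ, 0 < x →
      Tendsto (fun t : ℝ => t * (1 - G (a t * x))) atTop (𝓝 (x ^ (-α))))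
    (hHb : ∀ x : ℝ, 0 < x →
      Tendsto (fun t : ℝ => t * (1 - H (b t * x))) atTop (𝓝 (x ^ (-α)))) :
    ∀ x y : ℝ, 0 < x → 0 < y →
      Tendsto (fun t : ℝ => t * ((1 - G (a t * x)) + (1 - H (b t * y)) - 1 +
          gumbelCopula β (G (a t * x)) (H (b t * y))))
        atTop
        (𝓝 (x ^ (-α) + y ^ (-α) - (x ^ (-(α * β)) + y ^ (-(α * β))) ^ (β⁻¹))) :=
  gumbel_exponent_measure_limit_general α β hβ G H a b hGa hHb
end
end

section
/- Uniform rate for the Generalized Pareto distribution: Let α>0 and consider the Generalized Pareto survival function F̄(s) = (1 + s/α)^{−α} for s ≥ 0, with quantile function a(t) = α·(t^{1/α} − 1) for t > 1 (so that F̄(a(t)) = 1/t). Then there exists a constant C > 0 such that for all t ≥ 2, sup_{x ≥ 1} | t·F̄(a(t)·x) − x^{−α} | ≤ C·t^{−1/α}. -/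
/-!
Put `u = t^{1/α}`. Then `t·F̄(a(t)x) = y^{-α}` with `y = x - (x - 1)/u ∈ [1, x]`, so the error is
`y^{-α} - x^{-α}`, which the tangent line of the convex function `r ↦ r^{-α}` at `y` bounds by
`α (x - y)/y = α (x - 1)/(1 + (u - 1)x) ≤ α/(u - 1)`. For `t ≥ 2` we have `u ≥ 2^{1/α} > 1`,
and `u - 1` is then comparable to `u = t^{1/α}`.
-/

theorem one_sub_mul_le_rpow_one_add_neg {s p : ℝ} (hs : -1 < s) (hp : 0 ≤ p) :
    1 - p * s ≤ (1 + s) ^ (-p) := by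
  have hpos : 0 < 1 + s := by linarith
  have hlog : Real.log (1 + s) ≤ s := by linarith [Real.log_le_sub_one_of_pos hpos]
  calc 1 - p * s ≤ Real.log (1 + s) * -p + 1 := by nlinarith
    _ ≤ Real.exp (Real.log (1 + s) * -p) := Real.add_one_le_exp _
    _ = (1 + s) ^ (-p) := (Real.rpow_def_of_pos hpos _).symm

theorem rpow_neg_sub_rpow_neg_le {p x y : ℝ} (hp : 0 ≤ p) (hx : 0 < x) (hy : 0 < y) :
    y ^ (-p) - x ^ (-p) ≤ p * (x - y) / y * y ^ (-p) := by
  have hypos : 0 < y ^ (-p) := Real.rpow_pos_of_pos hy _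
  have hbern := one_sub_mul_le_rpow_one_add_neg (s := (x - y) / y)
    (by rw [lt_div_iff₀ hy]; linarith) hp
  rw [show 1 + (x - y) / y = x / y by field_simp; ring, Real.div_rpow hx.le hy.le,
    le_div_iff₀ hypos] at hbern
  linarith [show p * (x - y) / y * y ^ (-p) = p * ((x - y) / y) * y ^ (-p) by ring]

theorem abs_rpow_neg_sub_rpow_neg_le {p u x : ℝ} (hp : 0 ≤ p) (hu : 1 < u) (hx : 1 ≤ x) :
    |(x - (x - 1) / u) ^ (-p) - x ^ (-p)| ≤ p / (u - 1) := by
  set y := x - (x - 1) / u with hy_def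
  have hu0 : 0 < u := by linarith
  have hyu : y * u = 1 + (u - 1) * x := by rw [hy_def]; field_simp; ring
  have hy1 : 1 ≤ y := by nlinarith
  have hyx : y ≤ x := by
    rw [hy_def, sub_le_self_iff]; exact div_nonneg (by linarith) hu0.le
  have hy0 : 0 < y := by linarith
  have hxy : (x - y) / y ≤ 1 / (u - 1) := by
    rw [div_le_div_iff₀ hy0 (by linarith)]; nlinarith
  rw [abs_of_nonneg (sub_nonneg.2 (Real.rpow_le_rpow_of_nonpos hy0 hyx (by linarith)))]
  calc y ^ (-p) - x ^ (-p) ≤ p * (x - y) / y * y ^ (-p) :=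
        rpow_neg_sub_rpow_neg_le hp (by linarith) hy0
    _ ≤ p * ((x - y) / y) := by
        rw [mul_div_assoc]
        exact mul_le_of_le_one_right (mul_nonneg hp (div_nonneg (by linarith) hy0.le))
          (Real.rpow_le_one_of_one_le_of_nonpos hy1 (by linarith))
    _ ≤ p / (u - 1) := by
        rw [div_eq_mul_one_div p]; exact mul_le_mul_of_nonneg_left hxy hp

theorem gpd_rescaled_tail_eq {α t x : ℝ} (hα : 0 < α) (ht : 1 ≤ t) (hx : 0 ≤ x) :
    t * (1 + (α * (t ^ α⁻¹ - 1)) * x / α) ^ (-α) = (x - (x - 1) / t ^ α⁻¹) ^ (-α) := by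
  have htu : (t ^ α⁻¹) ^ α = t := Real.rpow_inv_rpow (by linarith) hα.ne'
  set u := t ^ α⁻¹
  have hu : 1 ≤ u := Real.one_le_rpow ht (inv_nonneg.2 hα.le)
  have hbase : 0 < 1 + (u - 1) * x := by nlinarith
  rw [show 1 + α * (u - 1) * x / α = 1 + (u - 1) * x by field_simp,
    show x - (x - 1) / u = (1 + (u - 1) * x) / u by field_simp; ring,
    Real.div_rpow hbase.le (by linarith), Real.rpow_neg (by linarith : (0:ℝ) ≤ u), htu]
  field_simp

theorem one_div_sub_one_le {u₀ u : ℝ} (hu₀ : 1 < u₀) (hu : u₀ ≤ u) :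
    1 / (u - 1) ≤ u₀ / (u₀ - 1) * u⁻¹ := by
  rw [div_mul_eq_mul_div, ← div_eq_mul_inv, div_div,
    div_le_div_iff₀ (by linarith) (by nlinarith)]
  nlinarith

/-- Uniform rate for the Generalized Pareto distribution: with survival function
`F̄(s) = (1+s/α)^{−α}` and quantile `a(t) = α(t^{1/α}−1)`, there is `C > 0` such that
for all `t ≥ 2`, `sup_{x ≥ 1} |t·F̄(a(t)x) − x^{−α}| ≤ C·t^{−1/α}`. -/
theorem gpd_uniform_rate (α : ℝ) (hα : 0 < α) :
    ∃ C : ℝ, 0 < C ∧ ∀ t : ℝ, 2 ≤ t → ∀ x : ℝ, 1 ≤ x →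
      |t * (1 + (α * (t ^ α⁻¹ - 1)) * x / α) ^ (-α) - x ^ (-α)| ≤ C * t ^ (-α⁻¹) := by
  set u₀ : ℝ := 2 ^ α⁻¹
  have hu₀ : 1 < u₀ := Real.one_lt_rpow one_lt_two (inv_pos.2 hα)
  refine ⟨α * (u₀ / (u₀ - 1)), mul_pos hα (div_pos (by linarith) (by linarith)), ?_⟩
  intro t ht x hx
  have hu : u₀ ≤ t ^ α⁻¹ := Real.rpow_le_rpow zero_le_two ht (inv_nonneg.2 hα.le)
  rw [gpd_rescaled_tail_eq hα (by linarith) (by linarith),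
    Real.rpow_neg (by linarith : (0:ℝ) ≤ t) α⁻¹, mul_assoc]
  calc _ ≤ α / (t ^ α⁻¹ - 1) := abs_rpow_neg_sub_rpow_neg_le hα.le (by linarith) hx
    _ ≤ α * (u₀ / (u₀ - 1) * (t ^ α⁻¹)⁻¹) := by
        rw [div_eq_mul_one_div α]
        exact mul_le_mul_of_nonneg_left (one_div_sub_one_le hu₀ hu) hα.le
end

section
/- Multivariate exponent measure of the Gumbel copula (inclusion–exclusion formula): Let α>0, β≥1 and l≥1. Let (X_1,…,X_l) be a random vector whose joint cdf is F(x_1,…,x_l) = exp(−(Σ_{i=1}^{l}(−log F_i(x_i))^β)^{1/β}), where F_1,…,F_l are the marginal cdfs (the l-dimensional Gumbel copula with dependence coefficient β), and let a_1,…,a_l:(1,∞)→(0,∞) satisfy, for every x>0 and every i, t·(1−F_i(a_i(t)x)) → x^{−α} as t→∞. Then for every (x_1,…,x_l) with positive coordinates, t·P(X_1 > a_1(t)x_1, …, X_l > a_l(t)x_l) → Σ_{m=1}^{l} (−1)^{m+1} Σ_{1≤i_1<…<i_m≤l} ( x_{i_1}^{−αβ} + … + x_{i_m}^{−αβ} )^{1/β}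 as t→∞. -/
/-!
Write `u_i(t) = F_i(a_i(t) x_i)`. By inclusion–exclusion,
`P(X_i > a_i(t) x_i for all i) = ∑_{S ≠ ∅} (-1)^(|S|+1) (1 - C_S(t))`, where `C_S(t)` is the joint
cdf of the coordinates in `S`; sending the other coordinates to `+∞` shows that it is again a
Gumbel copula, `C_S(t) = exp (-(∑_{i ∈ S} (-log u_i(t))^β)^(1/β))`.
Since `-log u ~ 1 - u` as `u → 1`, the tail condition gives `t (-log u_i(t)) → x_i^(-α)`, so by
homogeneity of `v ↦ (∑ v_i^β)^(1/β)` the exponent times `t` tends to `(∑_{i ∈ S} x_i^(-αβ))^(1/β)`,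
and `1 - e^(-s) ~ s` turns this into the limit of `t (1 - C_S(t))`.
-/

open MeasureTheory Filter Topology Finset Real

namespace Finset

theorem sum_filter_nonempty_powerset {α M : Type*} [AddCommMonoid M] (s : Finset α)
    (f : Finset α → M) :
    ∑ u ∈ s.powerset with u.Nonempty, f u = ∑ m ∈ Icc 1 #s, ∑ u ∈ powersetCard m s, f u := by
  rw [sum_filter, sum_powerset, range_eq_Ico, sum_eq_sum_Ico_succ_bot (Nat.succ_pos _),
    Nat.succ_eq_add_one, Ico_add_one_right_eq_Icc, powersetCard_zero, sum_singleton,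
    if_neg not_nonempty_empty, zero_add]
  refine sum_congr rfl fun m hm => sum_congr rfl fun u hu => if_pos ?_
  rw [← card_pos, (mem_powersetCard.1 hu).2]
  exact (mem_Icc.1 hm).1

theorem sum_filter_nonempty_powerset_neg_one_pow {α : Type*} {s : Finset α}
    (hs : s.Nonempty) : ∑ u ∈ s.powerset with u.Nonempty, (-1 : ℝ) ^ (#u + 1) = 1 := by
  have h : ∑ u ∈ s.powerset, (-1 : ℝ) ^ #u = 0 := by
    exact_mod_cast sum_powerset_neg_one_pow_card_of_nonempty hs
  have hempty : {u ∈ s.powerset | ¬u.Nonempty} = {∅} := by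
    ext u
    simp +contextual [not_nonempty_iff_eq_empty]
  rw [← sum_filter_add_sum_filter_not _ Finset.Nonempty, hempty, sum_singleton] at h
  simp only [pow_succ, ← sum_mul]
  simp only [card_empty, pow_zero] at h
  linarith

end Finset

theorem tendsto_zero_of_tendsto_mul_atTop_s18 {f : ℝ → ℝ} {c : ℝ}
    (h : Tendsto (fun t => t * f t) atTop (𝓝 c)) : Tendsto f atTop (𝓝 0) := by
  refine (h.div_atTop tendsto_id).congr' ?_
  filter_upwards [eventually_ne_atTop 0] with t ht
  exact mul_div_cancel_left₀ (f t) ht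

theorem one_sub_le_neg_log {u : ℝ} (hu : 0 < u) : 1 - u ≤ -log u := by
  linarith [log_le_sub_one_of_pos hu]

theorem neg_log_le_one_sub_div {u : ℝ} (hu : 0 < u) : -log u ≤ (1 - u) / u := by
  have := one_sub_inv_le_log_of_pos hu
  rw [sub_div, div_self hu.ne', one_div]
  linarith

theorem tendsto_mul_neg_log_of_tendsto_mul_one_sub {u : ℝ → ℝ} {c : ℝ}
    (h : Tendsto (fun t => t * (1 - u t)) atTop (𝓝 c)) :
    Tendsto (fun t => t * -log (u t)) atTop (𝓝 c) := by
  have hu : Tendsto u atTop (𝓝 1) := by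
    simpa using (tendsto_zero_of_tendsto_mul_atTop_s18 h).const_sub 1
  have hupper : Tendsto (fun t => t * (1 - u t) / u t) atTop (𝓝 c) := by
    rw [← div_one c]
    exact h.div hu one_ne_zero
  refine tendsto_of_tendsto_of_tendsto_of_le_of_le' h hupper ?_ ?_ <;>
    filter_upwards [hu.eventually (eventually_gt_nhds one_pos), eventually_ge_atTop 0]
      with t hpos ht
  · exact mul_le_mul_of_nonneg_left (one_sub_le_neg_log hpos) ht
  · rw [mul_div_assoc]
    exact mul_le_mul_of_nonneg_left (neg_log_le_one_sub_div hpos) ht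

theorem tendsto_mul_one_sub_exp_neg {s : ℝ → ℝ} {c : ℝ}
    (h : Tendsto (fun t => t * s t) atTop (𝓝 c)) :
    Tendsto (fun t => t * (1 - exp (-s t))) atTop (𝓝 c) := by
  have hexp : Tendsto (fun t => exp (-s t)) atTop (𝓝 1) := by
    simpa using ((tendsto_zero_of_tendsto_mul_atTop_s18 h).neg).rexp
  have hlower : Tendsto (fun t => t * s t * exp (-s t)) atTop (𝓝 c) := by
    simpa using h.mul hexp
  refine tendsto_of_tendsto_of_tendsto_of_le_of_le' hlower h ?_ ?_ <;>
    filter_upwards [eventually_ge_atTop 0] with t ht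
  · have := neg_log_le_one_sub_div (exp_pos (-s t))
    rw [log_exp, neg_neg, le_div_iff₀ (exp_pos _)] at this
    rw [mul_assoc]
    exact mul_le_mul_of_nonneg_left this ht
  · have := one_sub_le_neg_log (exp_pos (-s t))
    rw [log_exp, neg_neg] at this
    exact mul_le_mul_of_nonneg_left this ht

/-- `exp (-powerSumRoot β univ (fun i => -log (u i)))` is the Gumbel copula `C_β(u)`. -/
noncomputable def powerSumRoot {ι : Type*} (β : ℝ) (s : Finset ι) (v : ι → ℝ) : ℝ :=
  (∑ i ∈ s, v i ^ β) ^ β⁻¹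

section powerSumRoot

variable {ι : Type*} {β : ℝ}

theorem continuous_powerSumRoot (hβ : 0 ≤ β) (s : Finset ι) :
    Continuous (powerSumRoot β s) :=
  (continuous_rpow_const (inv_nonneg.2 hβ)).comp <|
    continuous_finsetSum s fun i _ => (continuous_rpow_const hβ).comp (continuous_apply i)

theorem mul_powerSumRoot (hβ : β ≠ 0) (s : Finset ι) {t : ℝ} (ht : 0 ≤ t) {v : ι → ℝ}
    (hv : ∀ i ∈ s, 0 ≤ v i) :
    t * powerSumRoot β s v = powerSumRoot β s (fun i => t * v i) := by
  have hsum : 0 ≤ ∑ i ∈ s, v i ^ β := sum_nonneg fun i hi => rpow_nonneg (hv i hi) β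
  simp only [powerSumRoot]
  rw [sum_congr rfl fun i hi => mul_rpow ht (hv i hi), ← mul_sum,
    mul_rpow (rpow_nonneg ht β) hsum, rpow_rpow_inv ht hβ]

theorem powerSumRoot_piecewise_zero [Fintype ι] [DecidableEq ι] (hβ : β ≠ 0) (s : Finset ι)
    (v : ι → ℝ) : powerSumRoot β univ (s.piecewise v 0) = powerSumRoot β s v := by
  simp only [powerSumRoot, Finset.piecewise, apply_ite (· ^ β), Pi.zero_apply, zero_rpow hβ,
    sum_ite_mem, univ_inter]

end powerSumRoot

theorem tendsto_measureReal_iUnion_atTop {Ω ι : Type*} [MeasurableSpace Ω] {P : Measure Ω}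
    [IsFiniteMeasure P] [Preorder ι] [IsCountablyGenerated (atTop : Filter ι)]
    {s : ι → Set Ω} (hs : Monotone s) :
    Tendsto (fun n => P.real (s n)) atTop (𝓝 (P.real (⋃ n, s n))) :=
  (ENNReal.tendsto_toReal (measure_ne_top _ _)).comp (tendsto_measure_iUnion_atTop hs)

theorem tendsto_measureReal_le_natCast {Ω : Type*} [MeasurableSpace Ω] (P : Measure Ω)
    [IsFiniteMeasure P] (f : Ω → ℝ) :
    Tendsto (fun n : ℕ => P.real {ω | f ω ≤ n}) atTop (𝓝 (P.real Set.univ)) := by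
  have hunion : (⋃ n : ℕ, {ω | f ω ≤ n}) = Set.univ :=
    Set.eq_univ_of_forall fun ω => Set.mem_iUnion.2 (exists_nat_ge (f ω))
  rw [← hunion]
  exact tendsto_measureReal_iUnion_atTop fun n m hnm ω (hω : f ω ≤ n) =>
    hω.trans (Nat.cast_le.2 hnm)

theorem tendsto_measureReal_forall_le_piecewise {Ω ι : Type*} [Finite ι] [DecidableEq ι]
    [MeasurableSpace Ω] (P : Measure Ω) [IsFiniteMeasure P] (X : Ω → ι → ℝ) (s : Finset ι)
    (c : ι → ℝ) :
    Tendsto (fun n : ℕ => P.real {ω | ∀ i, X ω i ≤ s.piecewise c (fun _ => n) i}) atTop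
      (𝓝 (P.real (⋂ i ∈ s, {ω | X ω i ≤ c i}))) := by
  have hunion : (⋃ n : ℕ, {ω | ∀ i, X ω i ≤ s.piecewise c (fun _ => n) i}) =
      ⋂ i ∈ s, {ω | X ω i ≤ c i} := by
    ext ω
    simp only [Set.mem_iUnion, Set.mem_iInter]
    constructor
    · rintro ⟨n, hn⟩ i hi
      simpa [hi] using hn i
    · intro h
      obtain ⟨M, hM⟩ := (Set.finite_range (X ω)).bddAbove
      obtain ⟨n, hn⟩ := exists_nat_ge M
      refine ⟨n, fun i => ?_⟩
      by_cases hi : i ∈ s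
      · simpa [hi] using h i hi
      · simpa [hi] using (hM (Set.mem_range_self i)).trans hn
  rw [← hunion]
  refine tendsto_measureReal_iUnion_atTop fun n m hnm ω hω i => (hω i).trans ?_
  by_cases hi : i ∈ s
  · simp [hi]
  · simpa [hi] using hnm

theorem measureReal_iInter_compl_eq_sum_powerset {Ω ι : Type*} [Fintype ι] [Nonempty ι]
    [MeasurableSpace Ω] (P : Measure Ω) [IsProbabilityMeasure P] {A : ι → Set Ω}
    (hA : ∀ i, MeasurableSet (A i)) :
    P.real (⋂ i, (A i)ᶜ) = ∑ u ∈ univ.powerset with u.Nonempty,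
      (-1 : ℝ) ^ (#u + 1) * (1 - P.real (⋂ i ∈ u, A i)) := by
  have hunion : (⋃ i, A i) = ⋃ i ∈ univ, A i := by simp
  rw [← Set.compl_iUnion, probReal_compl_eq_one_sub (MeasurableSet.iUnion hA), hunion,
    measureReal_biUnion_eq_sum_powerset fun i _ => hA i]
  simp only [mul_sub, mul_one, sum_sub_distrib,
    sum_filter_nonempty_powerset_neg_one_pow univ_nonempty]

theorem measureReal_biInter_le_of_gumbel {Ω ι : Type*} [Fintype ι] [MeasurableSpace Ω]
    {P : Measure Ω} [IsProbabilityMeasure P] {X : Ω → ι → ℝ} {F : ι → ℝ → ℝ} {β : ℝ}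
    (hβ : 0 < β)
    (hmarg : ∀ i x, F i x = P.real {ω | X ω i ≤ x})
    (hjoint : ∀ x : ι → ℝ, P.real {ω | ∀ i, X ω i ≤ x i} =
      exp (-powerSumRoot β univ fun i => -log (F i (x i))))
    (s : Finset ι) (c : ι → ℝ) :
    P.real (⋂ i ∈ s, {ω | X ω i ≤ c i}) =
      exp (-powerSumRoot β s fun i => -log (F i (c i))) := by
  classical
  refine tendsto_nhds_unique (tendsto_measureReal_forall_le_piecewise P X s c) ?_
  have hlog : ∀ i, Tendsto (fun n : ℕ => -log (F i (s.piecewise c (fun _ => n) i))) atTop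
      (𝓝 (s.piecewise (fun i => -log (F i (c i))) 0 i)) := by
    intro i
    by_cases hi : i ∈ s
    · simp [hi]
    · have hF : Tendsto (fun n : ℕ => F i n) atTop (𝓝 1) := by
        simpa [← hmarg] using tendsto_measureReal_le_natCast P (X · i)
      simpa [hi] using (hF.log one_ne_zero).neg
  have hroot := ((continuous_powerSumRoot hβ.le univ).tendsto _).comp (tendsto_pi_nhds.2 hlog)
  rw [powerSumRoot_piecewise_zero hβ.ne'] at hroot
  exact hroot.neg.rexp.congr fun n => (hjoint _).symm

theorem tendsto_mul_one_sub_exp_neg_powerSumRoot {ι : Type*} {β : ℝ} (hβ : 0 < β)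
    (s : Finset ι) {u : ι → ℝ → ℝ} {c : ι → ℝ} (hu : ∀ i t, u i t ∈ Set.Icc 0 1)
    (h : ∀ i, Tendsto (fun t => t * (1 - u i t)) atTop (𝓝 (c i))) :
    Tendsto (fun t => t * (1 - exp (-powerSumRoot β s fun i => -log (u i t)))) atTop
      (𝓝 (powerSumRoot β s c)) := by
  refine tendsto_mul_one_sub_exp_neg ?_
  have hlog := fun i => tendsto_mul_neg_log_of_tendsto_mul_one_sub (h i)
  refine (((continuous_powerSumRoot hβ.le s).tendsto c).comp (tendsto_pi_nhds.2 hlog)).congr' ?_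
  filter_upwards [eventually_ge_atTop 0] with t ht
  exact (mul_powerSumRoot hβ.ne' s ht fun i _ =>
    neg_nonneg.2 (log_nonpos (hu i t).1 (hu i t).2)).symm

theorem gumbel_multivariate_exponent_measure_general
    (α β : ℝ) (hβ : 1 ≤ β)
    (l : ℕ) (hl : 1 ≤ l)
    {Ω : Type*} [MeasurableSpace Ω] (P : Measure Ω) [IsProbabilityMeasure P]
    (X : Ω → Fin l → ℝ) (hX : Measurable X)
    (F : Fin l → ℝ → ℝ)
    (hmarg : ∀ i s, F i s = (P {ω | X ω i ≤ s}).toReal)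
    (hjoint : ∀ x : Fin l → ℝ,
      (P {ω | ∀ i, X ω i ≤ x i}).toReal =
        Real.exp (-((∑ i, (-Real.log (F i (x i))) ^ β) ^ (β⁻¹))))
    (a : Fin l → ℝ → ℝ)
    (hTail : ∀ i, ∀ x : ℝ, 0 < x →
      Tendsto (fun t : ℝ => t * (1 - F i (a i t * x))) atTop (𝓝 (x ^ (-α)))) :
    ∀ x : Fin l → ℝ, (∀ i, 0 < x i) →
      Tendsto (fun t : ℝ => t * (P {ω | ∀ i, a i t * x i < X ω i}).toReal)
        atTop
        (𝓝 (∑ m ∈ Finset.Icc 1 l, (-1 : ℝ) ^ (m + 1) *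
          ∑ s ∈ Finset.powersetCard m (Finset.univ : Finset (Fin l)),
            (∑ i ∈ s, x i ^ (-(α * β))) ^ (β⁻¹))) := by
  intro x hx
  have hβ_pos : 0 < β := by linarith
  have : Nonempty (Fin l) := ⟨⟨0, hl⟩⟩
  have hF : ∀ i y, F i y ∈ Set.Icc 0 1 := fun i y =>
    hmarg i y ▸ ⟨measureReal_nonneg, measureReal_le_one⟩
  have hexceed : ∀ t, t * P.real {ω | ∀ i, a i t * x i < X ω i} =
      ∑ u ∈ univ.powerset with u.Nonempty, (-1 : ℝ) ^ (#u + 1) *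
        (t * (1 - exp (-powerSumRoot β u fun i => -log (F i (a i t * x i))))) := by
    intro t
    have hset : {ω | ∀ i, a i t * x i < X ω i} = ⋂ i, {ω | X ω i ≤ a i t * x i}ᶜ := by
      ext; simp
    have hA : ∀ i, MeasurableSet {ω | X ω i ≤ a i t * x i} := fun i =>
      measurableSet_le hX.eval measurable_const
    rw [hset, measureReal_iInter_compl_eq_sum_powerset P hA, mul_sum]
    refine sum_congr rfl fun u _ => ?_
    rw [measureReal_biInter_le_of_gumbel hβ_pos hmarg hjoint]
    ring
  have hlimit : ∑ u ∈ univ.powerset with u.Nonempty,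
      (-1 : ℝ) ^ (#u + 1) * powerSumRoot β u (fun i => x i ^ (-α)) =
      ∑ m ∈ Icc 1 l, (-1 : ℝ) ^ (m + 1) *
        ∑ s ∈ powersetCard m univ, (∑ i ∈ s, x i ^ (-(α * β))) ^ β⁻¹ := by
    rw [sum_filter_nonempty_powerset, card_univ, Fintype.card_fin]
    refine sum_congr rfl fun m _ => ?_
    rw [mul_sum]
    refine sum_congr rfl fun u hu => ?_
    rw [(mem_powersetCard.1 hu).2, powerSumRoot]
    simp only [← rpow_mul (hx _).le, neg_mul]
  rw [← hlimit]
  refine (tendsto_finsetSum _ fun u _ => ?_).congr fun t => (hexceed t).symm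
  exact (tendsto_mul_one_sub_exp_neg_powerSumRoot hβ_pos u (fun i t => hF i (a i t * x i))
    fun i => hTail i (x i) (hx i)).const_mul _

/-- Multivariate exponent measure of the Gumbel copula (inclusion–exclusion formula):
if the joint cdf of `(X_1,…,X_l)` is the `l`-dimensional Gumbel copula of the margins and
`t(1−F_i(a_i(t)x)) → x^{−α}` for each `i`, then
`t·P(X_1 > a_1(t)x_1, …, X_l > a_l(t)x_l)` converges to
`∑_{m=1}^{l} (−1)^{m+1} ∑_{i_1<…<i_m} (x_{i_1}^{−αβ} + … + x_{i_m}^{−αβ})^{1/β}`. -/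
theorem gumbel_multivariate_exponent_measure
    (α β : ℝ) (hα : 0 < α) (hβ : 1 ≤ β)
    (l : ℕ) (hl : 1 ≤ l)
    {Ω : Type*} [MeasurableSpace Ω] (P : Measure Ω) [IsProbabilityMeasure P]
    (X : Ω → Fin l → ℝ) (hX : Measurable X)
    (F : Fin l → ℝ → ℝ)
    (hmarg : ∀ i s, F i s = (P {ω | X ω i ≤ s}).toReal)
    (hjoint : ∀ x : Fin l → ℝ,
      (P {ω | ∀ i, X ω i ≤ x i}).toReal =
        Real.exp (-((∑ i, (-Real.log (F i (x i))) ^ β) ^ (β⁻¹))))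
    (a : Fin l → ℝ → ℝ)
    (hTail : ∀ i, ∀ x : ℝ, 0 < x →
      Tendsto (fun t : ℝ => t * (1 - F i (a i t * x))) atTop (𝓝 (x ^ (-α)))) :
    ∀ x : Fin l → ℝ, (∀ i, 0 < x i) →
      Tendsto (fun t : ℝ => t * (P {ω | ∀ i, a i t * x i < X ω i}).toReal)
        atTop
        (𝓝 (∑ m ∈ Finset.Icc 1 l, (-1 : ℝ) ^ (m + 1) *
          ∑ s ∈ Finset.powersetCard m (Finset.univ : Finset (Fin l)),
            (∑ i ∈ s, x i ^ (-(α * β))) ^ (β⁻¹))) :=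
  gumbel_multivariate_exponent_measure_general α β hβ l hl P X hX F hmarg hjoint a hTail
end
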